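/- arXiv:1402.2669 — 7 statements merged into one kernel-verified Lean document; each statement's English description precedes it below -/
import Mathlib

section
/- The collinearity graph G admits no proper coloring with 7 colors; that is, for every function c : {0,1,…,14} → {1,…,7} there exist two distinct vertices v, w lying in a common block with c(v) = c(w). -/
/-- The nine blocks: 5-element subsets of `Fin 15`. -/
def blocks : Finset (Finset (Fin 15)) :=
  { {0,1,2,3,4}, {0,5,6,7,8}, {9,10,11,12,13}, {1,5,9,10,14}, {1,2,3,6,11},
    {4,5,7,8,12}, {2,7,9,13,14}, {3,8,10,13,14}, {0,4,6,11,12} }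

lemma triple_has_edge : ∀ a b c : Fin 15, a ≠ b → a ≠ c → b ≠ c →
    (∃ B ∈ blocks, a ∈ B ∧ b ∈ B) ∨ (∃ B ∈ blocks, a ∈ B ∧ c ∈ B) ∨
    (∃ B ∈ blocks, b ∈ B ∧ c ∈ B) := by decide

/-- The collinearity graph admits no proper coloring with 7 colors: for every
function `c : Fin 15 → Fin 7` there are two distinct vertices lying in a common
block which receive the same color. -/
theorem no_proper_7_coloring (c : Fin 15 → Fin 7) :
    ∃ v w : Fin 15, v ≠ w ∧ (∃ B ∈ blocks, v ∈ B ∧ w ∈ B) ∧ c v = c w := by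
  have h : Fintype.card (Fin 7) * 2 < Fintype.card (Fin 15) := by simp
  obtain ⟨y, hy⟩ := Fintype.exists_lt_card_fiber_of_mul_lt_card c h
  rw [Finset.two_lt_card_iff] at hy
  obtain ⟨a, b, d, ha, hb, hd, hab, had, hbd⟩ := hy
  simp only [Finset.mem_filter] at ha hb hd
  rcases triple_has_edge a b d hab had hbd with h' | h' | h'
  · exact ⟨a, b, hab, h', ha.2.trans hb.2.symm⟩
  · exact ⟨a, d, had, h', ha.2.trans hd.2.symm⟩
  · exact ⟨b, d, hbd, h', hb.2.trans hd.2.symm⟩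
end

section
/- The chromatic number of the collinearity graph G equals 8: G admits a proper coloring with 8 colors but no proper coloring with 7 colors. -/
def G : SimpleGraph (Fin 15) where
  Adj v w := v ≠ w ∧ ∃ B ∈ blocks, v ∈ B ∧ w ∈ B
  symm := by
    constructor
    intro v w h
    obtain ⟨hvw, B, hB, hv, hw⟩ := h
    exact ⟨hvw.symm, B, hB, hw, hv⟩
  loopless := by
    constructor
    intro v h
    exact h.1 rfl

open Finset

namespace SimpleGraph

variable {V α : Type*} {G : SimpleGraph V}

theorem Coloring.card_le_mul_of_indepSetFree [Fintype V] [Fintype α] [DecidableEq α] {m : ℕ}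
    (C : G.Coloring α) (hG : G.IndepSetFree (m + 1)) : Fintype.card V ≤ m * Fintype.card α := by
  refine card_le_mul_card_image_of_maps_to (fun v _ ↦ mem_univ (C v)) m fun c _ ↦ ?_
  by_contra! hcard
  obtain ⟨t, hts, htcard⟩ := exists_subset_card_eq hcard
  refine hG t ⟨(C.isIndepSet_colorClass c).mono fun v hv ↦ ?_, htcard⟩
  exact (mem_filter.1 (hts hv)).2

theorem not_colorable_of_indepSetFree [Fintype V] {k m : ℕ} (hG : G.IndepSetFree (m + 1))
    (hcard : m * k < Fintype.card V) : ¬ G.Colorable k := by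
  rintro ⟨C⟩
  have := C.card_le_mul_of_indepSetFree hG
  rw [Fintype.card_fin] at this
  omega

theorem indepSetFree_three_iff [DecidableEq V] :
    G.IndepSetFree 3 ↔ ∀ a b c, a ≠ b → a ≠ c → b ≠ c → G.Adj a b ∨ G.Adj a c ∨ G.Adj b c := by
  rw [← cliqueFree_compl, CliqueFree]
  simp only [is3Clique_iff, compl_adj]
  constructor
  · intro h a b c hab hac hbc
    by_contra! hn
    exact h {a, b, c} ⟨a, b, c, ⟨hab, hn.1⟩, ⟨hac, hn.2.1⟩, ⟨hbc, hn.2.2⟩, rfl⟩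
  · rintro h _ ⟨a, b, c, ⟨hab, hab'⟩, ⟨hac, hac'⟩, ⟨hbc, hbc'⟩, rfl⟩
    rcases h a b c hab hac hbc with h | h | h <;> contradiction

end SimpleGraph

instance : DecidableRel G.Adj := fun _ _ ↦ instDecidableAnd

theorem colorable_eight : G.Colorable 8 :=
  ⟨.mk ![0, 1, 2, 3, 4, 2, 5, 1, 6, 0, 4, 6, 3, 5, 7] (by decide)⟩

theorem indepSetFree_three : G.IndepSetFree 3 :=
  SimpleGraph.indepSetFree_three_iff.2 (by decide)

/-- The chromatic number of the collinearity graph equals 8: it admits a proper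
coloring with 8 colors but no proper coloring with 7 colors. -/
theorem chromatic_number_eq_eight :
    G.chromaticNumber = 8 ∧ G.Colorable 8 ∧ ¬ G.Colorable 7 := by
  have h7 : ¬ G.Colorable 7 :=
    SimpleGraph.not_colorable_of_indepSetFree indepSetFree_three (by norm_num)
  exact ⟨SimpleGraph.chromaticNumber_eq_iff_colorable_not_colorable.2 ⟨colorable_eight, h7⟩,
    colorable_eight, h7⟩
end

section
/- For every proper coloring c : {0,1,…,14} → {1,…,7} of the collinearity graph G, the color sets coincide: {c(1), c(2), c(3), c(11)} = {c(5), c(7), c(8), c(12)}, and this common 4-element set is disjoint from {c(0), c(4), c(6)}. -/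
/-!
The vertex sets `{0,1,2,3,4,6,11}` and `{0,4,5,6,7,8,12}` are 7-cliques of `G` sharing the
triangle `{0,4,6}`. A proper 7-coloring is a bijection on each of them, so both
`{c 1, c 2, c 3, c 11}` and `{c 5, c 7, c 8, c 12}` are the complement of `{c 0, c 4, c 6}`.
-/

open Finset

theorem SimpleGraph.IsClique.injOn_of_adj_ne {V α : Type*} {H : SimpleGraph V} {s : Set V}
    (hs : H.IsClique s) {c : V → α} (hc : ∀ v w, H.Adj v w → c v ≠ c w) : Set.InjOn c s :=
  fun _ hv _ hw hvw => by_contra fun hne => hc _ _ (hs hv hw hne) hvw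

theorem Finset.image_eq_compl_image_of_injOn {α β : Type*} [DecidableEq α] [Fintype β]
    [DecidableEq β] {f : α → β} {A T : Finset α} (hf : Set.InjOn f ↑(A ∪ T))
    (hAT : Disjoint A T) (hcard : #A + #T = Fintype.card β) :
    A.image f = (T.image f)ᶜ := by
  have hsub : A.image f ⊆ (T.image f)ᶜ := by
    rw [subset_compl_iff_disjoint_right, disjoint_left]
    simp only [mem_image, not_exists, not_and]
    rintro _ ⟨a, ha, rfl⟩ t ht hta
    have hat : a = t := hf (by simp [ha]) (by simp [ht]) hta.symm
    exact disjoint_left.mp hAT ha (hat ▸ ht)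
  refine eq_of_subset_of_card_le hsub ?_
  rw [card_compl, card_image_of_injOn (hf.mono (coe_subset.mpr subset_union_left)),
    card_image_of_injOn (hf.mono (coe_subset.mpr subset_union_right))]
  omega

instance inst_s4 : DecidableRel G.Adj := fun v w =>
  inferInstanceAs (Decidable (v ≠ w ∧ ∃ B ∈ blocks, v ∈ B ∧ w ∈ B))

/-- For every proper coloring `c : Fin 15 → Fin 7` of the collinearity graph,
the color sets `{c 1, c 2, c 3, c 11}` and `{c 5, c 7, c 8, c 12}` coincide,
this common set has 4 elements, and it is disjoint from `{c 0, c 4, c 6}`. -/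
theorem proper_7_coloring_color_sets (c : Fin 15 → Fin 7)
    (hc : ∀ v w : Fin 15, G.Adj v w → c v ≠ c w) :
    ({c 1, c 2, c 3, c 11} : Finset (Fin 7)) = {c 5, c 7, c 8, c 12} ∧
    ({c 1, c 2, c 3, c 11} : Finset (Fin 7)).card = 4 ∧
    Disjoint ({c 1, c 2, c 3, c 11} : Finset (Fin 7)) {c 0, c 4, c 6} := by
  have colors_eq_compl : ∀ A : Finset (Fin 15), G.IsClique (↑(A ∪ {0, 4, 6}) : Set (Fin 15)) →
      Disjoint A {0, 4, 6} → #A = 4 →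
        A.image c = (({0, 4, 6} : Finset (Fin 15)).image c)ᶜ ∧ #(A.image c) = 4 := by
    intro A hK hAT hA
    have hinj := hK.injOn_of_adj_ne hc
    exact ⟨image_eq_compl_image_of_injOn hinj hAT (by rw [hA]; rfl),
      hA ▸ card_image_of_injOn (hinj.mono (coe_subset.mpr subset_union_left))⟩
  obtain ⟨hA, hcard⟩ := colors_eq_compl {1, 2, 3, 11} (by decide +kernel) (by decide +kernel) rfl
  obtain ⟨hB, -⟩ := colors_eq_compl {5, 7, 8, 12} (by decide +kernel) (by decide +kernel) rfl
  simp only [image_insert, image_singleton] at hA hB hcard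
  exact ⟨hA.trans hB.symm, hcard, hA ▸ disjoint_compl_left⟩
end

section
/- The permutations τ = (2 3)(7 8)(9 10) and ω = (1 7 3 5 2 8)(9 13 10)(4 6)(11 12) of {0,1,…,14} each map the set of nine blocks to itself (sending blocks to blocks as unordered sets); they satisfy τ² = id, ω⁶ = id, and τωτ = ω⁻¹; and the subgroup of the symmetric group on 15 letters generated by τ and ω has order 12 and is isomorphic to the dihedral group of order 12. -/
set_option maxRecDepth 20000

/-- The permutation τ = (2 3)(7 8)(9 10) of `{0,…,14}`. -/
def τ : Equiv.Perm (Fin 15) :=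
  ([2, 3].formPerm) * ([7, 8].formPerm) * ([9, 10].formPerm)

/-- The permutation ω = (1 7 3 5 2 8)(9 13 10)(4 6)(11 12) of `{0,…,14}`. -/
def ω : Equiv.Perm (Fin 15) :=
  ([1, 7, 3, 5, 2, 8].formPerm) * ([9, 13, 10].formPerm) *
    ([4, 6].formPerm) * ([11, 12].formPerm)

lemma mem_blocks_iff (B : Finset (Fin 15)) : B ∈ blocks ↔
    B = {0,1,2,3,4} ∨ B = {0,5,6,7,8} ∨ B = {9,10,11,12,13} ∨ B = {1,5,9,10,14} ∨
    B = {1,2,3,6,11} ∨ B = {4,5,7,8,12} ∨ B = {2,7,9,13,14} ∨ B = {3,8,10,13,14} ∨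
    B = {0,4,6,11,12} := by
  simp [blocks]

lemma tau_sq : τ ^ 2 = 1 := by decide

lemma tau_mul_tau : τ * τ = 1 := by rw [← sq]; exact tau_sq

lemma omega_six : ω ^ 6 = 1 := by decide

lemma conj_rel : τ * ω * τ = ω⁻¹ := by decide

/-- powers of ω only depend on exponent mod 6 -/
lemma omega_pow_mod (a b : ℕ) (h : a % 6 = b % 6) : ω ^ a = ω ^ b := by
  have key : ∀ c : ℕ, ω ^ c = ω ^ (c % 6) := by
    intro c
    conv_lhs => rw [← Nat.div_add_mod c 6]
    rw [pow_add, pow_mul, omega_six, one_pow, one_mul]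
  rw [key a, key b, h]

lemma omega_pow_add (i j : ZMod 6) :
    ω ^ (i + j).val = ω ^ i.val * ω ^ j.val := by
  rw [← pow_add]
  apply omega_pow_mod
  have h : (i + j).val = (i.val + j.val) % 6 := ZMod.val_add i j
  omega

lemma tau_conj_pow (k : ℕ) : τ * ω ^ k * τ = (ω⁻¹) ^ k := by
  rw [← conj_rel]
  induction k with
  | zero => simp [tau_mul_tau]
  | succ n ih =>
    rw [pow_succ, pow_succ, ← ih]
    calc τ * (ω ^ n * ω) * τ = τ * ω ^ n * ((τ * τ) * (ω * τ)) := by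
          rw [tau_mul_tau, one_mul]; group
      _ = τ * ω ^ n * τ * (τ * ω * τ) := by group

lemma neg_val_eq (i : ZMod 6) : (5 * i.val) % 6 = (-i).val := by revert i; decide

lemma omega_pow_swap (i : ZMod 6) :
    ω ^ i.val * τ = τ * ω ^ (-i).val := by
  have h1 : τ * ω ^ i.val * τ = ω ^ (-i).val := by
    rw [tau_conj_pow]
    have hinv : ω⁻¹ = ω ^ 5 := by decide
    rw [hinv, ← pow_mul]
    apply omega_pow_mod
    have h := neg_val_eq i
    have h2 : (-i).val < 6 := ZMod.val_lt _
    omega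
  calc ω ^ i.val * τ = τ * (τ * ω ^ i.val * τ) := by
        rw [← mul_assoc, ← mul_assoc, tau_mul_tau, one_mul]
    _ = τ * ω ^ (-i).val := by rw [h1]
/-- the map DihedralGroup 6 → Perm (Fin 15) -/
def phiFun : DihedralGroup 6 → Equiv.Perm (Fin 15)
  | DihedralGroup.r i => ω ^ i.val
  | DihedralGroup.sr i => τ * ω ^ i.val

def φ : DihedralGroup 6 →* Equiv.Perm (Fin 15) where
  toFun := phiFun
  map_one' := by
    rw [DihedralGroup.one_def]
    simp [phiFun, ZMod.val_zero]
  map_mul' := by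
    rintro (i | i) (j | j)
    · rw [DihedralGroup.r_mul_r]
      simp only [phiFun]
      exact omega_pow_add i j
    · rw [DihedralGroup.r_mul_sr]
      simp only [phiFun]
      symm
      calc ω ^ i.val * (τ * ω ^ j.val) = (ω ^ i.val * τ) * ω ^ j.val := by group
        _ = τ * ω ^ (-i).val * ω ^ j.val := by rw [omega_pow_swap]
        _ = τ * (ω ^ (-i).val * ω ^ j.val) := by group
        _ = τ * ω ^ (-i + j).val := by rw [← omega_pow_add]
        _ = τ * ω ^ (j - i).val := by rw [neg_add_eq_sub]
      
    · rw [DihedralGroup.sr_mul_r]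
      simp only [phiFun]
      rw [mul_assoc, ← omega_pow_add]
    · rw [DihedralGroup.sr_mul_sr]
      simp only [phiFun]
      symm
      calc τ * ω ^ i.val * (τ * ω ^ j.val)
          = τ * ((ω ^ i.val * τ) * ω ^ j.val) := by group
        _ = τ * ((τ * ω ^ (-i).val) * ω ^ j.val) := by rw [omega_pow_swap]
        _ = (τ * τ) * (ω ^ (-i).val * ω ^ j.val) := by group
        _ = ω ^ (-i + j).val := by rw [tau_mul_tau, one_mul, ← omega_pow_add]
        _ = ω ^ (j - i).val := by rw [neg_add_eq_sub]
      

lemma phi_injective : Function.Injective φ := by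
  rw [injective_iff_map_eq_one]
  rintro (i | i) h
  · have : ω ^ i.val = 1 := h
    have h0 : i = 0 := by revert this; revert i; decide
    rw [h0, DihedralGroup.one_def]
  · exact absurd h (by revert i; decide)

lemma phi_range : φ.range = Subgroup.closure ({τ, ω} : Set (Equiv.Perm (Fin 15))) := by
  apply le_antisymm
  · rintro x ⟨(i | i), rfl⟩
    · exact pow_mem (Subgroup.subset_closure (by simp)) _
    · exact mul_mem (Subgroup.subset_closure (by simp))
        (pow_mem (Subgroup.subset_closure (by simp)) _)
  · rw [Subgroup.closure_le]
    rintro x (rfl | rfl)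
    · exact ⟨DihedralGroup.sr 0, by
        show τ * ω ^ (0 : ZMod 6).val = τ; decide⟩
    · exact ⟨DihedralGroup.r 1, by
        show ω ^ (1 : ZMod 6).val = ω; decide⟩

/-- τ and ω both map the set of nine blocks to itself, satisfy the dihedral
relations `τ² = 1`, `ω⁶ = 1`, `τωτ = ω⁻¹`, and generate a subgroup of order 12
of the symmetric group on 15 letters, isomorphic to the dihedral group of
order 12. -/
theorem tau_omega_dihedral_symmetry :
    (∀ B ∈ blocks, B.image τ ∈ blocks) ∧
    (∀ B ∈ blocks, B.image ω ∈ blocks) ∧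
    τ ^ 2 = 1 ∧ ω ^ 6 = 1 ∧ τ * ω * τ = ω⁻¹ ∧
    Nat.card (Subgroup.closure ({τ, ω} : Set (Equiv.Perm (Fin 15)))) = 12 ∧
    Nonempty ((Subgroup.closure ({τ, ω} : Set (Equiv.Perm (Fin 15)))) ≃* DihedralGroup 6) := by
  have e : DihedralGroup 6 ≃* (Subgroup.closure ({τ, ω} : Set (Equiv.Perm (Fin 15)))) :=
    (MonoidHom.ofInjective phi_injective).trans (MulEquiv.subgroupCongr phi_range)
  refine ⟨?_, ?_, tau_sq, omega_six, conj_rel, ?_, ⟨e.symm⟩⟩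
  · intro B hB
    rw [mem_blocks_iff] at hB ⊢
    rcases hB with rfl|rfl|rfl|rfl|rfl|rfl|rfl|rfl|rfl <;>
      first
      | (left; decide) | (right; left; decide) | (right; right; left; decide)
      | (right; right; right; left; decide)
      | (right; right; right; right; left; decide)
      | (right; right; right; right; right; left; decide)
      | (right; right; right; right; right; right; left; decide)
      | (right; right; right; right; right; right; right; left; decide)
      | (right; right; right; right; right; right; right; right; decide)
  · intro B hB
    rw [mem_blocks_iff] at hB ⊢
    rcases hB with rfl|rfl|rfl|rfl|rfl|rfl|rfl|rfl|rfl <;>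
      first
      | (left; decide) | (right; left; decide) | (right; right; left; decide)
      | (right; right; right; left; decide)
      | (right; right; right; right; left; decide)
      | (right; right; right; right; right; left; decide)
      | (right; right; right; right; right; right; left; decide)
      | (right; right; right; right; right; right; right; left; decide)
      | (right; right; right; right; right; right; right; right; decide)
  · rw [← Nat.card_congr e.toEquiv, Nat.card_eq_fintype_card, DihedralGroup.card]
end

section
/- Let β : Fin 9 → Fin 5 → Fin 15 be any assignment of an ordered 5-tuple of vertices to each of 9 blocks such that each block is injective (no vertex occurs twice in a block) and each vertex of Fin 15 occurs in exactly three of the 45 slots. Define, for a symmetric tensor F : (Fin 5)³ → ℂ, the contraction P(F) = Σ_φ (Π_{b=1}^{9} ε(φ(b,1),…,φ(b,5))) · (Π_{v} F(φ(v₁), φ(v₂), φ(v₃))), where the sum is over all assignments φ of an index in {1,…,5} to each slot, ε is the Levi-Civita symbol on 5 indices, and (v₁,v₂,v₃) are the three slots containing v. If there exist two distinct vertices v ≠ w that belong to exactly the same three blocks, then P(F) = 0 for every symmetric tensor F. -/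
/-- The Levi-Civita symbol on `n` indices. -/
noncomputable def eps {n : ℕ} (f : Fin n → Fin n) : ℂ :=
  if h : Function.Bijective f then ((Equiv.Perm.sign (Equiv.ofBijective f h) : ℤ) : ℂ) else 0

/-- A tensor `F : (Fin 5)³ → ℂ` is symmetric if it is invariant under all
permutations of its three arguments. -/
def IsSymTensor (F : Fin 5 → Fin 5 → Fin 5 → ℂ) : Prop :=
  ∀ i j k : Fin 5, F i j k = F j i k ∧ F i j k = F i k j

lemma eps_comp_perm {n : ℕ} (f : Fin n → Fin n) (π : Equiv.Perm (Fin n)) :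
    eps (fun k => f (π k)) = ((Equiv.Perm.sign π : ℤ) : ℂ) * eps f := by
  unfold eps
  by_cases hf : Function.Bijective f
  · have hc : Function.Bijective fun k => f (π k) := hf.comp π.bijective
    rw [dif_pos hf, dif_pos hc]
    have he : Equiv.ofBijective _ hc = (Equiv.ofBijective f hf) * π := by
      ext x; rfl
    rw [he, Equiv.Perm.sign_mul]
    push_cast
    ring
  · have hc : ¬ Function.Bijective fun k => f (π k) := by
      intro h
      exact hf (by simpa [Function.comp] using h.comp π.symm.bijective)
    rw [dif_neg hf, dif_neg hc, mul_zero]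


lemma sym_perm (F : Fin 5 → Fin 5 → Fin 5 → ℂ) (hF : IsSymTensor F)
    (g : Fin 3 → Fin 5) (h : Fin 3 → Fin 3) (hinj : Function.Injective h) :
    F (g (h 0)) (g (h 1)) (g (h 2)) = F (g 0) (g 1) (g 2) := by
  have hA : ∀ x y z, F x y z = F y x z := fun x y z => (hF x y z).1
  have hB : ∀ x y z, F x y z = F x z y := fun x y z => (hF x y z).2
  have hC : ∀ x y z, F x y z = F y z x := fun x y z => (hA x y z).trans (hB y x z)
  have hD : ∀ x y z, F x y z = F z x y := fun x y z => (hB x y z).trans (hA x z y)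
  have hE : ∀ x y z, F x y z = F z y x := fun x y z => (hA x y z).trans (hD y x z)
  have key : ∀ a b c : Fin 3, a ≠ b → a ≠ c → b ≠ c →
      F (g a) (g b) (g c) = F (g 0) (g 1) (g 2) := by
    intro a b c hab hac hbc
    fin_cases a <;> fin_cases b <;> fin_cases c <;> simp_all <;>
      first
        | rfl
        | exact hA _ _ _
        | exact hB _ _ _
        | exact hC _ _ _
        | exact hD _ _ _
        | exact hE _ _ _
  exact key (h 0) (h 1) (h 2) (fun e => by exact absurd (hinj e) (by decide))
    (fun e => by exact absurd (hinj e) (by decide)) (fun e => by exact absurd (hinj e) (by decide))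

/-- If a 5-uniform hypergraph with nine (ordered, injective) blocks on 15
vertices, in which every vertex occupies exactly three of the 45 slots, has two
distinct vertices belonging to exactly the same blocks, then the associated
contraction `P(F)` vanishes identically on symmetric tensors `F`. -/
theorem repeated_vertices_give_zero_polynomial
    (β : Fin 9 → Fin 5 → Fin 15)
    (hβinj : ∀ b : Fin 9, Function.Injective (β b))
    (hcount : ∀ u : Fin 15,
      (Finset.univ.filter fun p : Fin 9 × Fin 5 => β p.1 p.2 = u).card = 3)
    (s : Fin 15 → Fin 3 → Fin 9 × Fin 5)
    (hs : ∀ (u : Fin 15) (i : Fin 3), β (s u i).1 (s u i).2 = u)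
    (hsinj : ∀ u : Fin 15, Function.Injective (s u))
    (v w : Fin 15) (hvw : v ≠ w)
    (hsame : ∀ b : Fin 9, (∃ k, β b k = v) ↔ (∃ k, β b k = w))
    (F : Fin 5 → Fin 5 → Fin 5 → ℂ) (hF : IsSymTensor F) :
    ∑ φ : Fin 9 × Fin 5 → Fin 5,
      (∏ b : Fin 9, eps fun k => φ (b, k)) *
        ∏ u : Fin 15, F (φ (s u 0)) (φ (s u 1)) (φ (s u 2)) = 0 := by
  classical
  -- every slot of `u` is one of the `s u i`
  have hslots : ∀ u : Fin 15,
      (Finset.univ.filter fun p : Fin 9 × Fin 5 => β p.1 p.2 = u) =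
        Finset.univ.image (s u) := by
    intro u
    symm
    apply Finset.eq_of_subset_of_card_le
    · intro p hp
      simp only [Finset.mem_image, Finset.mem_univ, true_and] at hp
      obtain ⟨j, rfl⟩ := hp
      simp [hs u j]
    · rw [hcount u, Finset.card_image_of_injective _ (hsinj u)]
      simp
  have hslot_mem : ∀ (u : Fin 15) (p : Fin 9 × Fin 5), β p.1 p.2 = u → ∃ j, s u j = p := by
    intro u p hp
    have : p ∈ (Finset.univ.filter fun p : Fin 9 × Fin 5 => β p.1 p.2 = u) := by simp [hp]
    rw [hslots u] at this
    simpa using this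
  -- the number of blocks containing v is 3
  have hblocks : (Finset.univ.filter fun b : Fin 9 => ∃ k, β b k = v).card = 3 := by
    rw [← hcount v]
    symm
    apply Finset.card_bij (fun (p : Fin 9 × Fin 5) _ => p.1)
    · intro p hp
      simp only [Finset.mem_filter, Finset.mem_univ, true_and] at hp ⊢
      exact ⟨p.2, hp⟩
    · intro p hp q hq hpq
      simp only [Finset.mem_filter, Finset.mem_univ, true_and] at hp hq
      have : p.2 = q.2 := hβinj p.1 (by rw [hp, hpq, hq])
      exact Prod.ext hpq this
    · intro b hb
      simp only [Finset.mem_filter, Finset.mem_univ, true_and] at hb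
      obtain ⟨k, hk⟩ := hb
      exact ⟨(b, k), by simp [hk], rfl⟩
  -- the swapping involution on slots
  have hex : ∀ p : Fin 9 × Fin 5, β p.1 p.2 = v → ∃ k', β p.1 k' = w :=
    fun p h => (hsame p.1).mp ⟨p.2, h⟩
  have hex' : ∀ p : Fin 9 × Fin 5, β p.1 p.2 = w → ∃ k', β p.1 k' = v :=
    fun p h => (hsame p.1).mpr ⟨p.2, h⟩
  set T : Fin 9 × Fin 5 → Fin 9 × Fin 5 := fun p =>
    if h : β p.1 p.2 = v then (p.1, (hex p h).choose)
    else if h' : β p.1 p.2 = w then (p.1, (hex' p h').choose)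
    else p with hTdef
  have hT1 : ∀ p, (T p).1 = p.1 := by
    intro p
    simp only [hTdef]
    split_ifs <;> rfl
  have hTv : ∀ p, β p.1 p.2 = v → β (T p).1 (T p).2 = w := by
    intro p h
    simp only [hTdef, dif_pos h]
    exact (hex p h).choose_spec
  have hTw : ∀ p, β p.1 p.2 = w → β (T p).1 (T p).2 = v := by
    intro p h
    have hnv : ¬ β p.1 p.2 = v := by rw [h]; exact fun e => hvw e.symm
    simp only [hTdef, dif_neg hnv, dif_pos h]
    exact (hex' p h).choose_spec
  have hTo : ∀ p, β p.1 p.2 ≠ v → β p.1 p.2 ≠ w → T p = p := by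
    intro p h h'
    simp only [hTdef, dif_neg h, dif_neg h']
  have hpair : ∀ p q : Fin 9 × Fin 5, p.1 = q.1 → β p.1 p.2 = β q.1 q.2 → p = q := by
    intro p q h1 h2
    rw [h1] at h2
    exact Prod.ext h1 (hβinj q.1 h2)
  have hTT : Function.Involutive T := by
    intro p
    by_cases h : β p.1 p.2 = v
    · have ha : β (T p).1 (T p).2 = w := hTv p h
      have hb : β (T (T p)).1 (T (T p)).2 = v := hTw (T p) ha
      exact hpair _ _ (by rw [hT1, hT1]) (by rw [hb, h])
    · by_cases h' : β p.1 p.2 = w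
      · have ha : β (T p).1 (T p).2 = v := hTw p h'
        have hb : β (T (T p)).1 (T (T p)).2 = w := hTv (T p) ha
        exact hpair _ _ (by rw [hT1, hT1]) (by rw [hb, h'])
      · rw [hTo p h h', hTo p h h']
  -- summand
  set P : (Fin 9 × Fin 5 → Fin 5) → ℂ := fun φ =>
    (∏ b : Fin 9, eps fun k => φ (b, k)) *
      ∏ u : Fin 15, F (φ (s u 0)) (φ (s u 1)) (φ (s u 2)) with hPdef
  show ∑ φ : Fin 9 × Fin 5 → Fin 5, P φ = 0
  -- the key sign flip
  have hneg : ∀ φ : Fin 9 × Fin 5 → Fin 5, P (fun p => φ (T p)) = - P φ := by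
    intro φ
    have hepspart : (∏ b : Fin 9, eps fun k => φ (T (b, k))) =
        - ∏ b : Fin 9, eps fun k => φ (b, k) := by
      have hfac : ∀ b : Fin 9, (eps fun k => φ (T (b, k))) =
          (if ∃ k, β b k = v then (-1 : ℂ) else 1) * eps fun k => φ (b, k) := by
        intro b
        by_cases hb : ∃ k, β b k = v
        · obtain ⟨kv, hkv⟩ := hb
          set kw := (T (b, kv)).2 with hkwdef
          have hkw : β b kw = w := by
            have := hTv (b, kv) hkv
            rwa [hT1 (b, kv)] at this
          have hkvw : kv ≠ kw := fun e => hvw (by rw [← hkv, e, hkw])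
          have hτ : ∀ k : Fin 5, T (b, k) = (b, Equiv.swap kv kw k) := by
            intro k
            by_cases h1 : β b k = v
            · have hk : k = kv := hβinj b (by rw [h1, hkv])
              rw [hk, Equiv.swap_apply_left]
              exact Prod.ext (hT1 (b, kv)) rfl
            · by_cases h2 : β b k = w
              · have hk : k = kw := hβinj b (by rw [h2, hkw])
                rw [hk, Equiv.swap_apply_right]
                have h3 : β (T (b, kw)).1 (T (b, kw)).2 = v := hTw (b, kw) hkw
                rw [hT1 (b, kw)] at h3
                exact Prod.ext (hT1 (b, kw)) (hβinj b (by rw [h3, hkv]))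
              · rw [hTo (b,k) h1 h2, Equiv.swap_apply_of_ne_of_ne
                  (fun e => h1 (by rw [e, hkv])) (fun e => h2 (by rw [e, hkw]))]
          rw [if_pos ⟨kv, hkv⟩]
          calc (eps fun k => φ (T (b, k)))
              = eps fun k => φ (b, Equiv.swap kv kw k) := by
                congr 1; funext k; rw [hτ k]
            _ = ((Equiv.Perm.sign (Equiv.swap kv kw) : ℤ) : ℂ) *
                  eps fun k => φ (b, k) :=
                eps_comp_perm (fun k => φ (b, k)) (Equiv.swap kv kw)
            _ = (-1 : ℂ) * eps fun k => φ (b, k) := by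
                rw [Equiv.Perm.sign_swap hkvw]; norm_num
        · have hbw : ¬ ∃ k, β b k = w := fun hw => hb ((hsame b).mpr hw)
          rw [if_neg hb]
          have : ∀ k : Fin 5, T (b, k) = (b, k) := by
            intro k
            exact hTo (b,k) (fun e => hb ⟨k, e⟩) (fun e => hbw ⟨k, e⟩)
          rw [one_mul]
          congr 1
          funext k
          rw [this k]
      calc (∏ b : Fin 9, eps fun k => φ (T (b, k)))
          = ∏ b : Fin 9, (if ∃ k, β b k = v then (-1 : ℂ) else 1) *
              eps fun k => φ (b, k) := Finset.prod_congr rfl fun b _ => hfac b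
        _ = (∏ b : Fin 9, if ∃ k, β b k = v then (-1 : ℂ) else 1) *
              ∏ b : Fin 9, eps fun k => φ (b, k) := Finset.prod_mul_distrib
        _ = - ∏ b : Fin 9, eps fun k => φ (b, k) := by
            rw [Finset.prod_ite, Finset.prod_const, Finset.prod_const, hblocks]
            norm_num
    have hFpart : (∏ u : Fin 15, F (φ (T (s u 0))) (φ (T (s u 1))) (φ (T (s u 2)))) =
        ∏ u : Fin 15, F (φ (s u 0)) (φ (s u 1)) (φ (s u 2)) := by
      apply Fintype.prod_equiv (Equiv.swap v w)
      intro u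
      by_cases hu : u = v
      · subst hu
        rw [Equiv.swap_apply_left]
        -- T maps slots of v to slots of w
        have hchoice : ∀ i : Fin 3, ∃ j, s w j = T (s u i) := by
          intro i
          apply hslot_mem w
          have := hTv (s u i) (hs u i)
          exact this
        choose h hsp using hchoice
        have hinj : Function.Injective h := by
          intro i i' e
          have : T (s u i) = T (s u i') := by rw [← hsp i, ← hsp i', e]
          exact hsinj u (hTT.injective this)
        have key := sym_perm F hF (fun j => φ (s w j)) h hinj
        rw [hsp 0, hsp 1, hsp 2] at key
        exact key
      · by_cases hu' : u = w
        · subst hu'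
          rw [Equiv.swap_apply_right]
          have hchoice : ∀ i : Fin 3, ∃ j, s v j = T (s u i) := by
            intro i
            apply hslot_mem v
            exact hTw (s u i) (hs u i)
          choose h hsp using hchoice
          have hinj : Function.Injective h := by
            intro i i' e
            have : T (s u i) = T (s u i') := by rw [← hsp i, ← hsp i', e]
            exact hsinj u (hTT.injective this)
          have key := sym_perm F hF (fun j => φ (s v j)) h hinj
          rw [hsp 0, hsp 1, hsp 2] at key
          exact key
        · rw [Equiv.swap_apply_of_ne_of_ne hu hu']
          have hfix : ∀ i : Fin 3, T (s u i) = s u i := by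
            intro i
            exact hTo (s u i) (by rw [hs u i]; exact hu) (by rw [hs u i]; exact hu')
          rw [hfix 0, hfix 1, hfix 2]
    simp only [hPdef]
    rw [hepspart, hFpart]
    ring
  -- sum equals its own negative
  have hbij : Function.Bijective (fun φ : Fin 9 × Fin 5 → Fin 5 => fun p => φ (T p)) := by
    apply Function.Involutive.bijective
    intro φ
    funext p
    simp [hTT p]
  have h1 : ∑ φ : Fin 9 × Fin 5 → Fin 5, P (fun p => φ (T p)) =
      ∑ φ : Fin 9 × Fin 5 → Fin 5, P φ :=
    Fintype.sum_bijective _ hbij _ _ (fun φ => rfl)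
  have h2 : ∑ φ : Fin 9 × Fin 5 → Fin 5, P (fun p => φ (T p)) =
      - ∑ φ : Fin 9 × Fin 5 → Fin 5, P φ := by
    rw [← Finset.sum_neg_distrib]
    exact Finset.sum_congr rfl fun φ _ => hneg φ
  have h3 : (2 : ℂ) * ∑ φ : Fin 9 × Fin 5 → Fin 5, P φ = 0 := by
    linear_combination h1.symm.trans h2
  exact (mul_eq_zero.mp h3).resolve_left two_ne_zero
end

section
/- For all linear forms L₁, L₂, L₃ ∈ ℂ³ and the symmetric tensor F : (Fin 3)³ → ℂ defined by F(i,j,k) = Σ_{ν=1}^{3} (L_ν)_i (L_ν)_j (L_ν)_k, the Aronhold contraction S(F) equals 0, where S(F) = Σ ε(i₁,j₁,k₁) ε(i₂,j₂,l₁) ε(i₃,k₂,l₂) ε(j₃,k₃,l₃) F(i₁,i₂,i₃) F(j₁,j₂,j₃) F(k₁,k₂,k₃) F(l₁,l₂,l₃), the sum running over all twelve indices i₁,i₂,i₃,j₁,j₂,j₃,k₁,k₂,k₃,l₁,l₂,l₃ ∈ {1,2,3}. -/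
lemma eps_not_inj (f : Fin 3 → Fin 3) (h : ¬ Function.Injective f) : eps f = 0 := by
  rw [eps, dif_neg]; exact fun hb => h hb.injective

lemma eps_eq_sign (σ : Equiv.Perm (Fin 3)) (f : Fin 3 → Fin 3) (h : f = ⇑σ) :
    eps f = ((Equiv.Perm.sign σ : ℤ) : ℂ) := by
  subst h
  rw [eps, dif_pos σ.bijective]
  have : Equiv.ofBijective ⇑σ σ.bijective = σ := Equiv.ext fun x => rfl
  rw [this]

lemma e012 : eps ![0,1,2] = 1 := by
  rw [eps_eq_sign 1 _ (by decide)]; simp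

lemma e120 : eps ![1,2,0] = 1 := by
  rw [eps_eq_sign (Equiv.swap 0 2 * Equiv.swap 0 1) _ (by decide)]; simp

lemma e201 : eps ![2,0,1] = 1 := by
  rw [eps_eq_sign (Equiv.swap 0 1 * Equiv.swap 0 2) _ (by decide)]; simp

lemma e102 : eps ![1,0,2] = -1 := by
  rw [eps_eq_sign (Equiv.swap 0 1) _ (by decide)]; simp

lemma e021 : eps ![0,2,1] = -1 := by
  rw [eps_eq_sign (Equiv.swap 1 2) _ (by decide)]; simp

lemma e210 : eps ![2,1,0] = -1 := by
  rw [eps_eq_sign (Equiv.swap 0 2) _ (by decide)]; simp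

noncomputable def Dt (L : Fin 3 → Fin 3 → ℂ) (a b c : Fin 3) : ℂ :=
  ∑ i : Fin 3, ∑ j : Fin 3, ∑ k : Fin 3, eps ![i, j, k] * (L a i * L b j * L c k)

lemma eps_rep₁ (x y : Fin 3) : eps ![x, x, y] = 0 :=
  eps_not_inj _ fun h => by have := @h 0 1 (by simp); simp [Fin.ext_iff] at this

lemma eps_rep₂ (x y : Fin 3) : eps ![x, y, x] = 0 :=
  eps_not_inj _ fun h => by have := @h 0 2 (by simp); simp [Fin.ext_iff] at this

lemma eps_rep₃ (x y : Fin 3) : eps ![y, x, x] = 0 :=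
  eps_not_inj _ fun h => by have := @h 1 2 (by simp); simp [Fin.ext_iff] at this

lemma Dt_rep₁ (L : Fin 3 → Fin 3 → ℂ) (a c : Fin 3) : Dt L a a c = 0 := by
  simp only [Dt, Fin.sum_univ_three, eps_rep₁, eps_rep₂, eps_rep₃,
    e012, e120, e201, e102, e021, e210]
  ring

lemma Dt_rep₂ (L : Fin 3 → Fin 3 → ℂ) (a c : Fin 3) : Dt L a c a = 0 := by
  simp only [Dt, Fin.sum_univ_three, eps_rep₁, eps_rep₂, eps_rep₃,
    e012, e120, e201, e102, e021, e210]
  ring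

lemma Dt_rep₃ (L : Fin 3 → Fin 3 → ℂ) (a c : Fin 3) : Dt L c a a = 0 := by
  simp only [Dt, Fin.sum_univ_three, eps_rep₁, eps_rep₂, eps_rep₃,
    e012, e120, e201, e102, e021, e210]
  ring

lemma quad (L : Fin 3 → Fin 3 → ℂ) (a b c d : Fin 3) :
    Dt L a b c * Dt L a b d * Dt L a c d * Dt L b c d = 0 := by
  fin_cases a <;> fin_cases b <;> fin_cases c <;> fin_cases d <;>
    simp [Dt_rep₁, Dt_rep₂, Dt_rep₃]
lemma prod4 (e : ℂ) (A B C D : Fin 3 → ℂ) :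
    e * (∑ a : Fin 3, A a) * (∑ b : Fin 3, B b) * (∑ c : Fin 3, C c) * (∑ d : Fin 3, D d)
    = ∑ p : Fin 3 × Fin 3 × Fin 3 × Fin 3,
        e * (A p.2.2.2 * B p.2.2.1 * C p.2.1 * D p.1) := by
  simp only [Fintype.sum_prod_type, Finset.mul_sum, Finset.sum_mul]
  refine Finset.sum_congr rfl fun a _ => Finset.sum_congr rfl fun b _ =>
    Finset.sum_congr rfl fun c _ => Finset.sum_congr rfl fun d _ => by ring

set_option maxHeartbeats 4000000 in
lemma fact (L : Fin 3 → Fin 3 → ℂ) (a b c d : Fin 3) :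
    (∑ i₁ : Fin 3, ∑ i₂ : Fin 3, ∑ i₃ : Fin 3, ∑ j₁ : Fin 3, ∑ j₂ : Fin 3, ∑ j₃ : Fin 3, ∑ k₁ : Fin 3, ∑ k₂ : Fin 3, ∑ k₃ : Fin 3, ∑ l₁ : Fin 3, ∑ l₂ : Fin 3, ∑ l₃ : Fin 3, 
      eps ![i₁, j₁, k₁] * eps ![i₂, j₂, l₁] * eps ![i₃, k₂, l₂] * eps ![j₃, k₃, l₃] * (L a i₁ * L a i₂ * L a i₃ * (L b j₁ * L b j₂ * L b j₃) * (L c k₁ * L c k₂ * L c k₃) * (L d l₁ * L d l₂ * L d l₃)))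
    = Dt L a b c * Dt L a b d * Dt L a c d * Dt L b c d := by
    conv_lhs => enter [2, i₁, 2, i₂, 2, i₃, 2, j₁]; rw [Finset.sum_comm]
    conv_lhs => enter [2, i₁, 2, i₂, 2, i₃]; rw [Finset.sum_comm]
    conv_lhs => enter [2, i₁, 2, i₂]; rw [Finset.sum_comm]
    conv_lhs => enter [2, i₁]; rw [Finset.sum_comm]
    conv_lhs => rw [Finset.sum_comm]
    conv_lhs => enter [2, j₃, 2, i₁, 2, i₂, 2, i₃, 2, j₁, 2, j₂, 2, k₁]; rw [Finset.sum_comm]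
    conv_lhs => enter [2, j₃, 2, i₁, 2, i₂, 2, i₃, 2, j₁, 2, j₂]; rw [Finset.sum_comm]
    conv_lhs => enter [2, j₃, 2, i₁, 2, i₂, 2, i₃, 2, j₁]; rw [Finset.sum_comm]
    conv_lhs => enter [2, j₃, 2, i₁, 2, i₂, 2, i₃]; rw [Finset.sum_comm]
    conv_lhs => enter [2, j₃, 2, i₁, 2, i₂]; rw [Finset.sum_comm]
    conv_lhs => enter [2, j₃, 2, i₁]; rw [Finset.sum_comm]
    conv_lhs => enter [2, j₃]; rw [Finset.sum_comm]
    conv_lhs => enter [2, j₃, 2, k₃, 2, i₁, 2, i₂, 2, i₃, 2, j₁, 2, j₂, 2, k₁, 2, k₂, 2, l₁]; rw [Finset.sum_comm]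
    conv_lhs => enter [2, j₃, 2, k₃, 2, i₁, 2, i₂, 2, i₃, 2, j₁, 2, j₂, 2, k₁, 2, k₂]; rw [Finset.sum_comm]
    conv_lhs => enter [2, j₃, 2, k₃, 2, i₁, 2, i₂, 2, i₃, 2, j₁, 2, j₂, 2, k₁]; rw [Finset.sum_comm]
    conv_lhs => enter [2, j₃, 2, k₃, 2, i₁, 2, i₂, 2, i₃, 2, j₁, 2, j₂]; rw [Finset.sum_comm]
    conv_lhs => enter [2, j₃, 2, k₃, 2, i₁, 2, i₂, 2, i₃, 2, j₁]; rw [Finset.sum_comm]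
    conv_lhs => enter [2, j₃, 2, k₃, 2, i₁, 2, i₂, 2, i₃]; rw [Finset.sum_comm]
    conv_lhs => enter [2, j₃, 2, k₃, 2, i₁, 2, i₂]; rw [Finset.sum_comm]
    conv_lhs => enter [2, j₃, 2, k₃, 2, i₁]; rw [Finset.sum_comm]
    conv_lhs => enter [2, j₃, 2, k₃]; rw [Finset.sum_comm]
    conv_lhs => enter [2, j₃, 2, k₃, 2, l₃, 2, i₁]; rw [Finset.sum_comm]
    conv_lhs => enter [2, j₃, 2, k₃, 2, l₃]; rw [Finset.sum_comm]
    conv_lhs => enter [2, j₃, 2, k₃, 2, l₃, 2, i₃, 2, i₁, 2, i₂, 2, j₁, 2, j₂]; rw [Finset.sum_comm]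
    conv_lhs => enter [2, j₃, 2, k₃, 2, l₃, 2, i₃, 2, i₁, 2, i₂, 2, j₁]; rw [Finset.sum_comm]
    conv_lhs => enter [2, j₃, 2, k₃, 2, l₃, 2, i₃, 2, i₁, 2, i₂]; rw [Finset.sum_comm]
    conv_lhs => enter [2, j₃, 2, k₃, 2, l₃, 2, i₃, 2, i₁]; rw [Finset.sum_comm]
    conv_lhs => enter [2, j₃, 2, k₃, 2, l₃, 2, i₃]; rw [Finset.sum_comm]
    conv_lhs => enter [2, j₃, 2, k₃, 2, l₃, 2, i₃, 2, k₂, 2, i₁, 2, i₂, 2, j₁, 2, j₂, 2, k₁]; rw [Finset.sum_comm]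
    conv_lhs => enter [2, j₃, 2, k₃, 2, l₃, 2, i₃, 2, k₂, 2, i₁, 2, i₂, 2, j₁, 2, j₂]; rw [Finset.sum_comm]
    conv_lhs => enter [2, j₃, 2, k₃, 2, l₃, 2, i₃, 2, k₂, 2, i₁, 2, i₂, 2, j₁]; rw [Finset.sum_comm]
    conv_lhs => enter [2, j₃, 2, k₃, 2, l₃, 2, i₃, 2, k₂, 2, i₁, 2, i₂]; rw [Finset.sum_comm]
    conv_lhs => enter [2, j₃, 2, k₃, 2, l₃, 2, i₃, 2, k₂, 2, i₁]; rw [Finset.sum_comm]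
    conv_lhs => enter [2, j₃, 2, k₃, 2, l₃, 2, i₃, 2, k₂]; rw [Finset.sum_comm]
    conv_lhs => enter [2, j₃, 2, k₃, 2, l₃, 2, i₃, 2, k₂, 2, l₂]; rw [Finset.sum_comm]
    conv_lhs => enter [2, j₃, 2, k₃, 2, l₃, 2, i₃, 2, k₂, 2, l₂, 2, i₂, 2, i₁]; rw [Finset.sum_comm]
    conv_lhs => enter [2, j₃, 2, k₃, 2, l₃, 2, i₃, 2, k₂, 2, l₂, 2, i₂]; rw [Finset.sum_comm]
    conv_lhs => enter [2, j₃, 2, k₃, 2, l₃, 2, i₃, 2, k₂, 2, l₂, 2, i₂, 2, j₂, 2, i₁, 2, j₁]; rw [Finset.sum_comm]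
    conv_lhs => enter [2, j₃, 2, k₃, 2, l₃, 2, i₃, 2, k₂, 2, l₂, 2, i₂, 2, j₂, 2, i₁]; rw [Finset.sum_comm]
    conv_lhs => enter [2, j₃, 2, k₃, 2, l₃, 2, i₃, 2, k₂, 2, l₂, 2, i₂, 2, j₂]; rw [Finset.sum_comm]
    simp (config := { maxSteps := 100000000 }) only [Dt, Finset.sum_mul, Finset.mul_sum]
    refine Finset.sum_congr rfl fun j₃ _ => ?_
    refine Finset.sum_congr rfl fun k₃ _ => ?_
    refine Finset.sum_congr rfl fun l₃ _ => ?_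
    refine Finset.sum_congr rfl fun i₃ _ => ?_
    refine Finset.sum_congr rfl fun k₂ _ => ?_
    refine Finset.sum_congr rfl fun l₂ _ => ?_
    refine Finset.sum_congr rfl fun i₂ _ => ?_
    refine Finset.sum_congr rfl fun j₂ _ => ?_
    refine Finset.sum_congr rfl fun l₁ _ => ?_
    refine Finset.sum_congr rfl fun i₁ _ => ?_
    refine Finset.sum_congr rfl fun j₁ _ => ?_
    refine Finset.sum_congr rfl fun k₁ _ => ?_
    ring

/-- The Aronhold `S`-invariant, with symbolic expression `(abc)(abd)(acd)(bcd)`,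
vanishes on every ternary cubic which is a sum of three cubes of linear forms. -/
theorem aronhold_vanishes_on_three_cubes (L : Fin 3 → Fin 3 → ℂ) :
    (∑ i₁ : Fin 3, ∑ i₂ : Fin 3, ∑ i₃ : Fin 3,
     ∑ j₁ : Fin 3, ∑ j₂ : Fin 3, ∑ j₃ : Fin 3,
     ∑ k₁ : Fin 3, ∑ k₂ : Fin 3, ∑ k₃ : Fin 3,
     ∑ l₁ : Fin 3, ∑ l₂ : Fin 3, ∑ l₃ : Fin 3,
      eps ![i₁, j₁, k₁] * eps ![i₂, j₂, l₁] * eps ![i₃, k₂, l₂] * eps ![j₃, k₃, l₃] *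
        (∑ ν : Fin 3, L ν i₁ * L ν i₂ * L ν i₃) *
        (∑ ν : Fin 3, L ν j₁ * L ν j₂ * L ν j₃) *
        (∑ ν : Fin 3, L ν k₁ * L ν k₂ * L ν k₃) *
        (∑ ν : Fin 3, L ν l₁ * L ν l₂ * L ν l₃)) = 0 := by
  have stepA : (∑ i₁ : Fin 3, ∑ i₂ : Fin 3, ∑ i₃ : Fin 3,
     ∑ j₁ : Fin 3, ∑ j₂ : Fin 3, ∑ j₃ : Fin 3,
     ∑ k₁ : Fin 3, ∑ k₂ : Fin 3, ∑ k₃ : Fin 3,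
     ∑ l₁ : Fin 3, ∑ l₂ : Fin 3, ∑ l₃ : Fin 3,
      eps ![i₁, j₁, k₁] * eps ![i₂, j₂, l₁] * eps ![i₃, k₂, l₂] * eps ![j₃, k₃, l₃] *
        (∑ ν : Fin 3, L ν i₁ * L ν i₂ * L ν i₃) *
        (∑ ν : Fin 3, L ν j₁ * L ν j₂ * L ν j₃) *
        (∑ ν : Fin 3, L ν k₁ * L ν k₂ * L ν k₃) *
        (∑ ν : Fin 3, L ν l₁ * L ν l₂ * L ν l₃)) = (∑ i₁ : Fin 3, ∑ i₂ : Fin 3, ∑ i₃ : Fin 3, ∑ j₁ : Fin 3, ∑ j₂ : Fin 3, ∑ j₃ : Fin 3, ∑ k₁ : Fin 3, ∑ k₂ : Fin 3, ∑ k₃ : Fin 3, ∑ l₁ : Fin 3, ∑ l₂ : Fin 3, ∑ l₃ : Fin 3, ∑ p : Fin 3 × Fin 3 × Fin 3 × Fin 3, eps ![i₁, j₁, k₁] * eps ![i₂, j₂, l₁] * eps ![i₃, k₂, l₂] * eps ![j₃, k₃, l₃] * ((L p.2.2.2 i₁ * L p.2.2.2 i₂ * L p.2.2.2 i₃) * (L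 p.2.2.1 j₁ * L p.2.2.1 j₂ * L p.2.2.1 j₃) * (L p.2.1 k₁ * L p.2.1 k₂ * L p.2.1 k₃) * (L p.1 l₁ * L p.1 l₂ * L p.1 l₃))) := by
    refine Finset.sum_congr rfl fun i₁ _ => ?_
    refine Finset.sum_congr rfl fun i₂ _ => ?_
    refine Finset.sum_congr rfl fun i₃ _ => ?_
    refine Finset.sum_congr rfl fun j₁ _ => ?_
    refine Finset.sum_congr rfl fun j₂ _ => ?_
    refine Finset.sum_congr rfl fun j₃ _ => ?_
    refine Finset.sum_congr rfl fun k₁ _ => ?_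
    refine Finset.sum_congr rfl fun k₂ _ => ?_
    refine Finset.sum_congr rfl fun k₃ _ => ?_
    refine Finset.sum_congr rfl fun l₁ _ => ?_
    refine Finset.sum_congr rfl fun l₂ _ => ?_
    refine Finset.sum_congr rfl fun l₃ _ => ?_
    exact prod4 _ _ _ _ _
  rw [stepA]
  conv_lhs => enter [2, i₁, 2, i₂, 2, i₃, 2, j₁, 2, j₂, 2, j₃, 2, k₁, 2, k₂, 2, k₃, 2, l₁, 2, l₂]; rw [Finset.sum_comm]
  conv_lhs => enter [2, i₁, 2, i₂, 2, i₃, 2, j₁, 2, j₂, 2, j₃, 2, k₁, 2, k₂, 2, k₃, 2, l₁]; rw [Finset.sum_comm]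
  conv_lhs => enter [2, i₁, 2, i₂, 2, i₃, 2, j₁, 2, j₂, 2, j₃, 2, k₁, 2, k₂, 2, k₃]; rw [Finset.sum_comm]
  conv_lhs => enter [2, i₁, 2, i₂, 2, i₃, 2, j₁, 2, j₂, 2, j₃, 2, k₁, 2, k₂]; rw [Finset.sum_comm]
  conv_lhs => enter [2, i₁, 2, i₂, 2, i₃, 2, j₁, 2, j₂, 2, j₃, 2, k₁]; rw [Finset.sum_comm]
  conv_lhs => enter [2, i₁, 2, i₂, 2, i₃, 2, j₁, 2, j₂, 2, j₃]; rw [Finset.sum_comm]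
  conv_lhs => enter [2, i₁, 2, i₂, 2, i₃, 2, j₁, 2, j₂]; rw [Finset.sum_comm]
  conv_lhs => enter [2, i₁, 2, i₂, 2, i₃, 2, j₁]; rw [Finset.sum_comm]
  conv_lhs => enter [2, i₁, 2, i₂, 2, i₃]; rw [Finset.sum_comm]
  conv_lhs => enter [2, i₁, 2, i₂]; rw [Finset.sum_comm]
  conv_lhs => enter [2, i₁]; rw [Finset.sum_comm]
  conv_lhs => rw [Finset.sum_comm]
  refine Finset.sum_eq_zero fun p _ => ?_
  obtain ⟨d, c, b, a⟩ := p
  exact (fact L a b c d).trans (quad L a b c d)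
end

section
/- There is no family of twelve 5-element subsets B₁, …, B₁₂ of a 15-element set such that every 2-element subset of the 15-element set is contained in at least one Bᵢ. Consequently there is no 5-uniform hypergraph on 15 vertices with twelve hyperedges (in particular none that is 4-regular) whose collinearity graph is the complete graph K₁₅. -/
open Finset

lemma ite_card {α : Type*} [Fintype α] [DecidableEq α] (s : Finset α) :
    ∑ x : α, (if x ∈ s then (1:ℕ) else 0) = s.card := by
  simp [Finset.sum_ite_mem]

lemma pair_count {α : Type*} [Fintype α] [DecidableEq α] (s : Finset α) :
    ∑ i : α, ∑ j ∈ univ.erase i, (if i ∈ s ∧ j ∈ s then (1:ℕ) else 0)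
      = s.card * (s.card - 1) := by
  have h1 : ∀ i : α, ∑ j ∈ univ.erase i, (if i ∈ s ∧ j ∈ s then (1:ℕ) else 0)
      = if i ∈ s then s.card - 1 else 0 := by
    intro i
    by_cases hi : i ∈ s
    · simp only [hi, true_and, if_pos]
      rw [← Finset.card_filter]
      have h2 : (univ.erase i).filter (· ∈ s) = s.erase i := by
        ext x; simp [Finset.mem_erase, and_comm]
      rw [h2, Finset.card_erase_of_mem hi]
    · simp [hi]
  simp only [h1]
  rw [Finset.sum_ite_mem, Finset.univ_inter, Finset.sum_const, smul_eq_mul]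

lemma two_mul_le (k : ℕ) : 2 * k ≤ k * (k - 1) + 2 := by
  rcases k with _ | _ | k
  · simp
  · simp
  · have : 2 ≤ k + 2 := by omega
    calc 2 * (k + 2) = 2 * (k+1) + 2 := by ring
    _ ≤ (k+2) * (k+1) + 2 := by nlinarith
    _ = (k+2) * ((k+2) - 1) + 2 := by simp


set_option maxHeartbeats 1000000

/-- There is no family of twelve 5-element subsets of a 15-element set covering
every pair: `C(15,5,2) ≥ 13`. Consequently no 5-uniform hypergraph on 15
vertices with twelve hyperedges has collinearity graph `K₁₅`. -/
theorem no_twelve_block_pair_cover :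
    ¬ ∃ B : Fin 12 → Finset (Fin 15),
      (∀ i : Fin 12, (B i).card = 5) ∧
      ∀ v w : Fin 15, v ≠ w → ∃ i : Fin 12, v ∈ B i ∧ w ∈ B i := by
  classical
  rintro ⟨B, hcard, hcov⟩
  set D : Fin 15 → Finset (Fin 12) := fun v => univ.filter (fun i => v ∈ B i) with hD
  have hDmem : ∀ v i, i ∈ D v ↔ v ∈ B i := by intro v i; simp [hD]
  -- card of D v as a sum
  have hDcard : ∀ v, (D v).card = ∑ i : Fin 12, if v ∈ B i then (1:ℕ) else 0 := by
    intro v; rw [hD]; exact Finset.card_filter _ _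
  -- total degree 60
  have hdegsum : ∑ v : Fin 15, (D v).card = 60 := by
    simp only [hDcard]
    rw [Finset.sum_comm]
    have : ∀ i : Fin 12, ∑ v : Fin 15, (if v ∈ B i then (1:ℕ) else 0) = 5 := by
      intro i; rw [ite_card]; exact hcard i
    simp [this]
  -- erase cards
  have herase15 : ∀ v : Fin 15, (univ.erase v).card = 14 := by
    intro v; rw [Finset.card_erase_of_mem (mem_univ v)]; simp
  have herase12 : ∀ i : Fin 12, ((univ : Finset (Fin 12)).erase i).card = 11 := by
    intro i; rw [Finset.card_erase_of_mem (mem_univ i)]; simp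
  -- lower bound on degree
  have hdeg_lb : ∀ v, 4 ≤ (D v).card := by
    intro v
    have hsub : univ.erase v ⊆ (D v).biUnion (fun i => (B i).erase v) := by
      intro w hw
      have hwv : w ≠ v := (Finset.mem_erase.mp hw).1
      obtain ⟨i, hvi, hwi⟩ := hcov v w (Ne.symm hwv)
      exact Finset.mem_biUnion.mpr ⟨i, (hDmem v i).mpr hvi, Finset.mem_erase.mpr ⟨hwv, hwi⟩⟩
    have h1 : 14 ≤ ((D v).biUnion (fun i => (B i).erase v)).card := by
      rw [← herase15 v]; exact Finset.card_le_card hsub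
    have h2 : ((D v).biUnion (fun i => (B i).erase v)).card
        ≤ ∑ i ∈ D v, ((B i).erase v).card := Finset.card_biUnion_le
    have h3 : ∑ i ∈ D v, ((B i).erase v).card = 4 * (D v).card := by
      rw [Finset.sum_congr rfl (fun i hi => ?_), Finset.sum_const, smul_eq_mul, mul_comm]
      rw [Finset.card_erase_of_mem ((hDmem v i).mp hi), hcard i]
    omega
  -- degree exactly 4
  have hdeg : ∀ v, (D v).card = 4 := by
    intro v
    have h1 : (D v).card + ∑ w ∈ univ.erase v, (D w).card = 60 := by
      rw [Finset.add_sum_erase univ (fun w => (D w).card) (mem_univ v)]; exact hdegsum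
    have h2 : 56 ≤ ∑ w ∈ univ.erase v, (D w).card := by
      have := Finset.card_nsmul_le_sum (univ.erase v) (fun w => (D w).card) 4
        (fun w _ => hdeg_lb w)
      rw [herase15 v] at this; simpa using this
    have := hdeg_lb v; omega
  -- L v w := (D v ∩ D w).card ; row sums are 16
  have hLcard : ∀ v w : Fin 15, (D v ∩ D w).card
      = ∑ i : Fin 12, if v ∈ B i ∧ w ∈ B i then (1:ℕ) else 0 := by
    intro v w
    rw [← ite_card (D v ∩ D w)]
    exact Finset.sum_congr rfl fun i _ => if_congr (by simp [hDmem]) rfl rfl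
  have hrow : ∀ v : Fin 15, ∑ w ∈ univ.erase v, (D v ∩ D w).card = 16 := by
    intro v
    simp only [hLcard]
    rw [Finset.sum_comm]
    have h1 : ∀ i : Fin 12, ∑ w ∈ univ.erase v, (if v ∈ B i ∧ w ∈ B i then (1:ℕ) else 0)
        = if v ∈ B i then 4 else 0 := by
      intro i
      by_cases hvi : v ∈ B i
      · simp only [hvi, true_and, if_pos]
        rw [← Finset.card_filter]
        have h2 : (univ.erase v).filter (· ∈ B i) = (B i).erase v := by
          ext x; simp [Finset.mem_erase, and_comm]
        rw [h2, Finset.card_erase_of_mem hvi, hcard i]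
      · simp [hvi]
    rw [Finset.sum_congr rfl fun i _ => h1 i]
    have h3 : ∑ i : Fin 12, (if v ∈ B i then (4:ℕ) else 0)
        = 4 * ∑ i : Fin 12, (if v ∈ B i then (1:ℕ) else 0) := by
      rw [Finset.mul_sum]; exact Finset.sum_congr rfl fun i _ => by split <;> simp
    rw [h3, ← hDcard v, hdeg v]
  -- every pair lies in a block: L >= 1
  have hL1 : ∀ v : Fin 15, ∀ w ∈ univ.erase v, 1 ≤ (D v ∩ D w).card := by
    intro v w hw
    have hwv : w ≠ v := (Finset.mem_erase.mp hw).1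
    obtain ⟨i, hvi, hwi⟩ := hcov v w (Ne.symm hwv)
    exact Finset.card_pos.mpr ⟨i, Finset.mem_inter.mpr ⟨(hDmem v i).mpr hvi, (hDmem w i).mpr hwi⟩⟩
  -- per-vertex bound on the excess sum
  have hvert : ∀ v : Fin 15,
      ∑ w ∈ univ.erase v, (D v ∩ D w).card * ((D v ∩ D w).card - 1) ≤ 6 := by
    intro v
    set e : Fin 15 → ℕ := fun w => (D v ∩ D w).card - 1 with he
    have hLe : ∀ w ∈ univ.erase v, (D v ∩ D w).card = e w + 1 := by
      intro w hw; have := hL1 v w hw; simp only [he]; omega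
    have hesum : ∑ w ∈ univ.erase v, e w = 2 := by
      have h1 : ∑ w ∈ univ.erase v, (D v ∩ D w).card
          = (∑ w ∈ univ.erase v, e w) + 14 := by
        rw [Finset.sum_congr rfl hLe, Finset.sum_add_distrib, Finset.sum_const,
          herase15 v]; simp
      rw [hrow v] at h1; omega
    have he2 : ∀ w ∈ univ.erase v, e w ≤ 2 := by
      intro w hw; rw [← hesum]; exact Finset.single_le_sum (fun _ _ => Nat.zero_le _) hw
    calc ∑ w ∈ univ.erase v, (D v ∩ D w).card * ((D v ∩ D w).card - 1)
        = ∑ w ∈ univ.erase v, (e w * e w + e w) := by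
          refine Finset.sum_congr rfl fun w hw => ?_
          rw [hLe w hw, Nat.add_sub_cancel]; ring
      _ ≤ ∑ w ∈ univ.erase v, (e w * 2 + e w) := by
          refine Finset.sum_le_sum fun w hw => ?_
          have := he2 w hw; nlinarith
      _ = (∑ w ∈ univ.erase v, e w) * 2 + ∑ w ∈ univ.erase v, e w := by
          rw [Finset.sum_add_distrib, Finset.sum_mul]
      _ = 6 := by rw [hesum]
  -- total over all vertices ≤ 90
  have hT : ∑ v : Fin 15, ∑ w ∈ univ.erase v,
      (D v ∩ D w).card * ((D v ∩ D w).card - 1) ≤ 90 := by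
    calc ∑ v : Fin 15, ∑ w ∈ univ.erase v, (D v ∩ D w).card * ((D v ∩ D w).card - 1)
        ≤ ∑ _v : Fin 15, 6 := Finset.sum_le_sum fun v _ => hvert v
      _ = 90 := by simp
  -- double counting identity: vertex-pair side equals block-pair side
  have hident : ∑ v : Fin 15, ∑ w ∈ univ.erase v, (D v ∩ D w).card * ((D v ∩ D w).card - 1)
      = ∑ i : Fin 12, ∑ j ∈ univ.erase i, (B i ∩ B j).card * ((B i ∩ B j).card - 1) := by
    have hleft : ∀ v w : Fin 15,
        (D v ∩ D w).card * ((D v ∩ D w).card - 1)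
        = ∑ i : Fin 12, ∑ j ∈ univ.erase i,
            (if (v ∈ B i ∧ v ∈ B j) ∧ (w ∈ B i ∧ w ∈ B j) then (1:ℕ) else 0) := by
      intro v w
      rw [← pair_count (D v ∩ D w)]
      refine Finset.sum_congr rfl fun i _ => Finset.sum_congr rfl fun j _ => ?_
      refine if_congr ?_ rfl rfl
      simp only [Finset.mem_inter, hDmem]
      constructor <;> rintro ⟨⟨a,b⟩,⟨c,d⟩⟩ <;> exact ⟨⟨a,c⟩,⟨b,d⟩⟩
    have hright : ∀ i j : Fin 12,
        (B i ∩ B j).card * ((B i ∩ B j).card - 1)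
        = ∑ v : Fin 15, ∑ w ∈ univ.erase v,
            (if (v ∈ B i ∧ v ∈ B j) ∧ (w ∈ B i ∧ w ∈ B j) then (1:ℕ) else 0) := by
      intro i j
      rw [← pair_count (B i ∩ B j)]
      refine Finset.sum_congr rfl fun v _ => Finset.sum_congr rfl fun w _ => ?_
      refine if_congr ?_ rfl rfl
      simp only [Finset.mem_inter]
    calc ∑ v : Fin 15, ∑ w ∈ univ.erase v, (D v ∩ D w).card * ((D v ∩ D w).card - 1)
        = ∑ v : Fin 15, ∑ w ∈ univ.erase v, ∑ i : Fin 12, ∑ j ∈ univ.erase i,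
            (if (v ∈ B i ∧ v ∈ B j) ∧ (w ∈ B i ∧ w ∈ B j) then (1:ℕ) else 0) :=
          Finset.sum_congr rfl fun v _ => Finset.sum_congr rfl fun w _ => hleft v w
      _ = ∑ v : Fin 15, ∑ i : Fin 12, ∑ w ∈ univ.erase v, ∑ j ∈ univ.erase i,
            (if (v ∈ B i ∧ v ∈ B j) ∧ (w ∈ B i ∧ w ∈ B j) then (1:ℕ) else 0) :=
          Finset.sum_congr rfl fun v _ => Finset.sum_comm
      _ = ∑ i : Fin 12, ∑ v : Fin 15, ∑ w ∈ univ.erase v, ∑ j ∈ univ.erase i,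
            (if (v ∈ B i ∧ v ∈ B j) ∧ (w ∈ B i ∧ w ∈ B j) then (1:ℕ) else 0) :=
          Finset.sum_comm
      _ = ∑ i : Fin 12, ∑ v : Fin 15, ∑ j ∈ univ.erase i, ∑ w ∈ univ.erase v,
            (if (v ∈ B i ∧ v ∈ B j) ∧ (w ∈ B i ∧ w ∈ B j) then (1:ℕ) else 0) :=
          Finset.sum_congr rfl fun i _ =>
            Finset.sum_congr rfl fun v _ => Finset.sum_comm
      _ = ∑ i : Fin 12, ∑ j ∈ univ.erase i, ∑ v : Fin 15, ∑ w ∈ univ.erase v,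
            (if (v ∈ B i ∧ v ∈ B j) ∧ (w ∈ B i ∧ w ∈ B j) then (1:ℕ) else 0) :=
          Finset.sum_congr rfl fun i _ => Finset.sum_comm
      _ = ∑ i : Fin 12, ∑ j ∈ univ.erase i, (B i ∩ B j).card * ((B i ∩ B j).card - 1) :=
          Finset.sum_congr rfl fun i _ =>
            Finset.sum_congr rfl fun j _ => (hright i j).symm
  -- total block intersection sum is 180
  have hS2 : ∑ i : Fin 12, ∑ j ∈ univ.erase i, (B i ∩ B j).card = 180 := by
    have h1 : ∀ i j : Fin 12, (B i ∩ B j).card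
        = ∑ v : Fin 15, (if v ∈ B i ∧ v ∈ B j then (1:ℕ) else 0) := by
      intro i j
      rw [← ite_card (B i ∩ B j)]
      exact Finset.sum_congr rfl fun v _ => if_congr (by simp) rfl rfl
    calc ∑ i : Fin 12, ∑ j ∈ univ.erase i, (B i ∩ B j).card
        = ∑ i : Fin 12, ∑ j ∈ univ.erase i, ∑ v : Fin 15,
            (if v ∈ B i ∧ v ∈ B j then (1:ℕ) else 0) :=
          Finset.sum_congr rfl fun i _ => Finset.sum_congr rfl fun j _ => h1 i j
      _ = ∑ i : Fin 12, ∑ v : Fin 15, ∑ j ∈ univ.erase i,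
            (if v ∈ B i ∧ v ∈ B j then (1:ℕ) else 0) :=
          Finset.sum_congr rfl fun i _ => Finset.sum_comm
      _ = ∑ v : Fin 15, ∑ i : Fin 12, ∑ j ∈ univ.erase i,
            (if v ∈ B i ∧ v ∈ B j then (1:ℕ) else 0) := Finset.sum_comm
      _ = ∑ v : Fin 15, (D v).card * ((D v).card - 1) := by
          refine Finset.sum_congr rfl fun v _ => ?_
          rw [← pair_count (D v)]
          refine Finset.sum_congr rfl fun i _ => Finset.sum_congr rfl fun j _ => ?_
          refine if_congr ?_ rfl rfl
          simp only [hDmem]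
      _ = 180 := by
          rw [Finset.sum_congr rfl fun v _ => by rw [hdeg v]]
          simp
  -- block side is at least 96
  have hS3 : 96 ≤ ∑ i : Fin 12, ∑ j ∈ univ.erase i,
      (B i ∩ B j).card * ((B i ∩ B j).card - 1) := by
    have h1 : ∑ i : Fin 12, ∑ j ∈ univ.erase i, 2 * (B i ∩ B j).card
        ≤ ∑ i : Fin 12, ∑ j ∈ univ.erase i,
            ((B i ∩ B j).card * ((B i ∩ B j).card - 1) + 2) :=
      Finset.sum_le_sum fun i _ => Finset.sum_le_sum fun j _ => two_mul_le _
    have h2 : ∑ i : Fin 12, ∑ j ∈ univ.erase i, 2 * (B i ∩ B j).card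
        = 2 * ∑ i : Fin 12, ∑ j ∈ univ.erase i, (B i ∩ B j).card := by
      rw [Finset.mul_sum]
      exact Finset.sum_congr rfl fun i _ => (Finset.mul_sum _ _ _).symm
    have h3 : ∑ i : Fin 12, ∑ j ∈ univ.erase i,
          ((B i ∩ B j).card * ((B i ∩ B j).card - 1) + 2)
        = (∑ i : Fin 12, ∑ j ∈ univ.erase i,
            (B i ∩ B j).card * ((B i ∩ B j).card - 1)) + 264 := by
      have h4 : ∀ i : Fin 12, ∑ j ∈ univ.erase i,
            ((B i ∩ B j).card * ((B i ∩ B j).card - 1) + 2)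
          = (∑ j ∈ univ.erase i, (B i ∩ B j).card * ((B i ∩ B j).card - 1)) + 22 := by
        intro i
        rw [Finset.sum_add_distrib, Finset.sum_const, herase12 i]
        simp
      rw [Finset.sum_congr rfl fun i _ => h4 i, Finset.sum_add_distrib, Finset.sum_const]
      simp
    rw [h2, hS2, h3] at h1
    omega
  rw [hident] at hT
  omega
end
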